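/- Let n ≥ 1. In ℤ[x, y, z₁, …, z_n], set z₀ = 1 and z_{n+1} = z_{n+2} = 0, and let J be the ideal generated by the homogeneous components of positive degree of (1+x)(1+y)(1+z₁+⋯+z_n) − 1, i.e. by the elements z_k + (x+y) z_{k−1} + x y z_{k−2} for k = 1, …, n+2 (with the above conventions). Then there is a ring isomorphism ℤ[x, y, z₁, …, z_n]/J ≅ ℤ[x, y]/(s_{n+1}, x^{n+2}, y^{n+2}), sending x ↦ x and y ↦ y, where s_{n+1} = ∑_{i+j=n+1} x^i y^j. -/
import Mathlib

open MvPolynomial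

/-- The element `z_k` of `ℤ[x, y, z₁, …, z_n]` (variables indexed by `Fin (n+2)`, with
`x = X 0`, `y = X 1`, `z_k = X (k+1)` for `1 ≤ k ≤ n`), with the conventions `z₀ = 1` and
`z_{n+1} = z_{n+2} = 0`. -/
noncomputable def zVar (n : ℕ) (k : ℕ) : MvPolynomial (Fin (n + 2)) ℤ :=
  if h : 1 ≤ k ∧ k ≤ n then X ⟨k + 1, by omega⟩ else if k = 0 then 1 else 0

/-- The homogeneous component of degree `j+1` (for `0 ≤ j ≤ n+1`) of
`(1+x)(1+y)(1+z₁+⋯+z_n) − 1`, namely `z_{j+1} + (x+y)z_j + xy·z_{j−1}`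
(the last term being absent for `j = 0`). -/
noncomputable def whitneyGen (n : ℕ) (j : ℕ) : MvPolynomial (Fin (n + 2)) ℤ :=
  zVar n (j + 1) + (X 0 + X 1) * zVar n j +
    if j = 0 then 0 else X 0 * X 1 * zVar n (j - 1)

/-- The complete homogeneous polynomial `s k = ∑_{i+j=k} x^i y^j` in `ℤ[x, y]`. -/
noncomputable def hsum (k : ℕ) : MvPolynomial (Fin 2) ℤ :=
  ∑ i ∈ Finset.range (k + 1), X 0 ^ i * X 1 ^ (k - i)

namespace FlagAux

lemma hsum_zero : hsum 0 = 1 := by simp [hsum]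

lemma hsum_one : hsum 1 = X 0 + X 1 := by
  simp [hsum, Finset.sum_range_succ]; ring

lemma hsum_succA (k : ℕ) : hsum (k + 1) = X 0 * hsum k + X 1 ^ (k + 1) := by
  rw [hsum, Finset.sum_range_succ']
  simp only [pow_zero, one_mul, Nat.sub_zero, Nat.succ_sub_succ]
  rw [hsum, Finset.mul_sum]
  congr 1
  refine Finset.sum_congr rfl fun i hi => ?_
  ring

lemma hsum_succB (k : ℕ) : hsum (k + 1) = X 1 * hsum k + X 0 ^ (k + 1) := by
  rw [hsum, Finset.sum_range_succ]
  simp only [Nat.sub_self, pow_zero, mul_one]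
  rw [hsum, Finset.mul_sum]
  congr 1
  refine Finset.sum_congr rfl fun i hi => ?_
  rw [Finset.mem_range] at hi
  have : k + 1 - i = (k - i) + 1 := by omega
  rw [this]
  ring

lemma hsum_rec (k : ℕ) : hsum (k + 2) = (X 0 + X 1) * hsum (k + 1) - X 0 * X 1 * hsum k := by
  have a2 := hsum_succA (k + 1)
  have a1 := hsum_succA k
  have hX1 : (X 1 : MvPolynomial (Fin 2) ℤ) ^ (k + 2) = X 1 * (hsum (k+1) - X 0 * hsum k) := by
    have : (X 1 : MvPolynomial (Fin 2) ℤ) ^ (k + 1) = hsum (k+1) - X 0 * hsum k := by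
      linear_combination -a1
    linear_combination X 1 * this
  linear_combination a2 + hX1

lemma hsum_split (k : ℕ) : hsum (k + 2) = X 0 ^ (k + 2) + X 1 ^ (k + 2) + X 0 * X 1 * hsum k := by
  have a2 := hsum_succA (k + 1)
  have b1 := hsum_succB k
  linear_combination a2 + X 0 * b1

lemma xy_hsum (k : ℕ) : X 0 * X 1 * hsum k = X 0 * hsum (k + 1) - X 0 ^ (k + 2) := by
  linear_combination hsum_succA (k+1) - hsum_split k

lemma zVar_zero (n : ℕ) : zVar n 0 = 1 := by simp [zVar]

lemma zVar_of_le (n k : ℕ) (h1 : 1 ≤ k) (h2 : k ≤ n) :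
    zVar n k = X ⟨k + 1, by omega⟩ := by rw [zVar, dif_pos ⟨h1, h2⟩]

lemma zVar_of_gt (n k : ℕ) (h : n < k) : zVar n k = 0 := by
  rw [zVar, dif_neg (by omega), if_neg (by omega)]

noncomputable def fwd (n : ℕ) : MvPolynomial (Fin (n + 2)) ℤ →+* MvPolynomial (Fin 2) ℤ :=
  (aeval (fun i : Fin (n + 2) => if i.val = 0 then X 0 else if i.val = 1 then X 1
    else (-1) ^ (i.val - 1) * hsum (i.val - 1))).toRingHom

noncomputable def bwd (n : ℕ) : MvPolynomial (Fin 2) ℤ →+* MvPolynomial (Fin (n + 2)) ℤ :=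
  (aeval ![X 0, X 1]).toRingHom

lemma fwd_X0 (n : ℕ) : fwd n (X 0) = X 0 := by
  show (aeval _) (X (0 : Fin (n+2))) = _
  rw [aeval_X]; simp

lemma fwd_X1 (n : ℕ) : fwd n (X 1) = X 1 := by
  show (aeval _) (X (1 : Fin (n+2))) = _
  rw [aeval_X]
  have h0 : ((1 : Fin (n+2)).val) = 1 := by simp [Fin.val_one]
  simp [h0]

lemma bwd_X0 (n : ℕ) : bwd n (X 0) = X 0 := by
  show (aeval _) (X (0 : Fin 2)) = _
  rw [aeval_X]; simp

lemma bwd_X1 (n : ℕ) : bwd n (X 1) = X 1 := by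
  show (aeval _) (X (1 : Fin 2)) = _
  rw [aeval_X]; simp

lemma fwd_zVar (n k : ℕ) (hk : k ≤ n) : fwd n (zVar n k) = (-1) ^ k * hsum k := by
  rcases Nat.eq_zero_or_pos k with rfl | hk1
  · rw [zVar_zero, hsum_zero]; simp
  · rw [zVar_of_le n k hk1 hk]
    show (aeval _) (X _) = _
    rw [aeval_X]
    have h0 : k + 1 ≠ 0 := by omega
    have h1 : k + 1 ≠ 1 := by omega
    simp only [h0, h1, if_false, Nat.add_sub_cancel]

noncomputable def Jideal (n : ℕ) : Ideal (MvPolynomial (Fin (n + 2)) ℤ) :=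
  Ideal.span (whitneyGen n '' Set.Iio (n + 2))

noncomputable def Kideal (n : ℕ) : Ideal (MvPolynomial (Fin 2) ℤ) :=
  Ideal.span {hsum (n + 1), X 0 ^ (n + 2), X 1 ^ (n + 2)}

lemma neg_one_pow_cancel {R : Type*} [CommRing R] (k : ℕ) {a : R}
    (h : (-1 : R) ^ k * a = 0) : a = 0 := by
  have h1 : ((-1 : R)) ^ k * ((-1 : R)) ^ k = 1 := by
    rw [← mul_pow]; simp
  calc a = ((-1:R)^k * (-1:R)^k) * a := by rw [h1, one_mul]
  _ = (-1:R)^k * ((-1:R)^k * a) := by ring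
  _ = 0 := by rw [h, mul_zero]

lemma mkK_hsum (n : ℕ) : Ideal.Quotient.mk (Kideal n) (hsum (n + 1)) = 0 :=
  Ideal.Quotient.eq_zero_iff_mem.2 (Ideal.subset_span (by simp))

lemma mkK_X0 (n : ℕ) : Ideal.Quotient.mk (Kideal n) (X 0 ^ (n + 2)) = 0 :=
  Ideal.Quotient.eq_zero_iff_mem.2 (Ideal.subset_span (by simp))

lemma mkK_X1 (n : ℕ) : Ideal.Quotient.mk (Kideal n) (X 1 ^ (n + 2)) = 0 :=
  Ideal.Quotient.eq_zero_iff_mem.2 (Ideal.subset_span (by simp))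

lemma mkJ_whitney (n j : ℕ) (hj : j < n + 2) :
    Ideal.Quotient.mk (Jideal n) (whitneyGen n j) = 0 :=
  Ideal.Quotient.eq_zero_iff_mem.2 (Ideal.subset_span ⟨j, hj, rfl⟩)

lemma mkK_fwd_whitney (n : ℕ) (hn : 1 ≤ n) (j : ℕ) (hj : j < n + 2) :
    Ideal.Quotient.mk (Kideal n) (fwd n (whitneyGen n j)) = 0 := by
  rcases Nat.lt_trichotomy j n with hjn | hjn | hjn
  · have h1 : fwd n (whitneyGen n j) = 0 := by
      rcases Nat.eq_zero_or_pos j with rfl | hj1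
      · rw [whitneyGen, if_pos rfl]
        simp only [map_add, map_mul, map_zero, add_zero, fwd_X0, fwd_X1,
          fwd_zVar n 1 hn, fwd_zVar n 0 (Nat.zero_le n), hsum_zero, hsum_one]
        ring
      · obtain ⟨m, rfl⟩ := Nat.exists_eq_add_of_le' hj1
        rw [whitneyGen, if_neg (by omega)]
        have e1 : m + 1 - 1 = m := rfl
        rw [e1]
        simp only [map_add, map_mul, fwd_X0, fwd_X1,
          fwd_zVar n (m + 1 + 1) (by omega), fwd_zVar n (m + 1) (by omega),
          fwd_zVar n m (by omega)]
        have e2 : m + 1 + 1 = m + 2 := rfl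
        rw [e2]
        linear_combination ((-1 : MvPolynomial (Fin 2) ℤ)) ^ (m + 2) * hsum_rec m
    rw [h1, map_zero]
  · subst hjn
    obtain ⟨m, rfl⟩ := Nat.exists_eq_add_of_le' hn
    have hf : fwd (m+1) (whitneyGen (m+1) (m+1)) = (-1)^(m+1) * hsum (m+2) := by
      rw [whitneyGen, if_neg (by omega), zVar_of_gt (m+1) (m+1+1) (by omega)]
      have e1 : m + 1 - 1 = m := rfl
      rw [e1]
      simp only [map_add, map_mul, map_zero, zero_add, fwd_X0, fwd_X1,
        fwd_zVar (m+1) (m+1) le_rfl, fwd_zVar (m+1) m (by omega)]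
      linear_combination ((-1 : MvPolynomial (Fin 2) ℤ)) ^ m * hsum_rec m
    rw [hf, map_mul]
    have h2 := mkK_hsum (m+1)
    have e2 : m + 1 + 1 = m + 2 := rfl
    rw [e2] at h2
    rw [h2, mul_zero]
  · have hj1 : j = n + 1 := by omega
    subst hj1
    have hf : fwd n (whitneyGen n (n+1)) = (-1)^n * (X 0 * hsum (n+1) - X 0 ^ (n+2)) := by
      rw [whitneyGen, if_neg (by omega), zVar_of_gt n (n+1+1) (by omega),
        zVar_of_gt n (n+1) (by omega)]
      have e1 : n + 1 - 1 = n := rfl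
      rw [e1]
      simp only [map_add, map_mul, map_zero, zero_add, mul_zero, add_zero, fwd_X0,
        fwd_X1, fwd_zVar n n le_rfl]
      linear_combination ((-1 : MvPolynomial (Fin 2) ℤ)) ^ n * xy_hsum n
    rw [hf, map_mul, map_sub, map_mul, mkK_hsum n, mkK_X0 n, mul_zero, sub_zero, mul_zero]

/-- mod `J`, `z_k ≡ (-1)^k s_k` for `k ≤ n`. -/
lemma mkJ_zVar (n : ℕ) (hn : 1 ≤ n) :
    ∀ k, k ≤ n → Ideal.Quotient.mk (Jideal n) (zVar n k)
      = (-1) ^ k * Ideal.Quotient.mk (Jideal n) (bwd n (hsum k)) := by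
  intro k
  induction k using Nat.strong_induction_on with
  | _ k ih =>
    intro hk
    match k with
    | 0 => rw [zVar_zero, hsum_zero]; simp
    | 1 =>
      have hw := mkJ_whitney n 0 (by omega)
      rw [whitneyGen, if_pos rfl, zVar_zero] at hw
      simp only [map_add, map_mul, map_one, map_zero, add_zero, mul_one] at hw
      rw [hsum_one]
      simp only [map_add, bwd_X0, bwd_X1]
      linear_combination hw
    | (m + 2) =>
      have ih1 := ih (m + 1) (by omega) (by omega)
      have ih0 := ih m (by omega) (by omega)
      have hw := mkJ_whitney n (m + 1) (by omega)
      rw [whitneyGen, if_neg (by omega)] at hw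
      have e1 : m + 1 - 1 = m := rfl
      have e2 : m + 1 + 1 = m + 2 := rfl
      rw [e1, e2] at hw
      simp only [map_add, map_mul] at hw
      have hrec := congrArg (Ideal.Quotient.mk (Jideal n) ∘ bwd n) (hsum_rec m)
      simp only [Function.comp_apply, map_sub, map_mul, map_add, bwd_X0, bwd_X1] at hrec
      linear_combination hw - ((Ideal.Quotient.mk (Jideal n)) (X 0)
          + (Ideal.Quotient.mk (Jideal n)) (X 1)) * ih1
        - (Ideal.Quotient.mk (Jideal n)) (X 0) * (Ideal.Quotient.mk (Jideal n)) (X 1) * ih0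
        - ((-1 : MvPolynomial (Fin (n+2)) ℤ ⧸ Jideal n)) ^ (m + 2) * hrec

lemma mkJ_bwd_hsum (n : ℕ) (hn : 1 ≤ n) :
    Ideal.Quotient.mk (Jideal n) (bwd n (hsum (n + 1))) = 0 := by
  obtain ⟨m, rfl⟩ := Nat.exists_eq_add_of_le' hn
  have hw := mkJ_whitney (m+1) (m+1) (by omega)
  rw [whitneyGen, if_neg (by omega), zVar_of_gt (m+1) (m+1+1) (by omega)] at hw
  have e1 : m + 1 - 1 = m := rfl
  rw [e1] at hw
  simp only [map_add, map_mul, map_zero, zero_add] at hw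
  have ih1 := mkJ_zVar (m + 1) (by omega) (m + 1) le_rfl
  have ih0 := mkJ_zVar (m + 1) (by omega) m (by omega)
  have hrec := congrArg (Ideal.Quotient.mk (Jideal (m+1)) ∘ bwd (m+1)) (hsum_rec m)
  simp only [Function.comp_apply, map_sub, map_mul, map_add, bwd_X0, bwd_X1] at hrec
  have e2 : m + 1 + 1 = m + 2 := rfl
  rw [e2]
  refine neg_one_pow_cancel (m + 1) ?_
  linear_combination hw - ((Ideal.Quotient.mk (Jideal (m+1))) (X 0)
      + (Ideal.Quotient.mk (Jideal (m+1))) (X 1)) * ih1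
    - (Ideal.Quotient.mk (Jideal (m+1))) (X 0) * (Ideal.Quotient.mk (Jideal (m+1))) (X 1) * ih0
    + ((-1 : MvPolynomial (Fin (m+3)) ℤ ⧸ Jideal (m+1))) ^ (m + 1) * hrec

lemma mkJ_bwd_xy (n : ℕ) (hn : 1 ≤ n) :
    Ideal.Quotient.mk (Jideal n) (bwd n (X 0 * X 1 * hsum n)) = 0 := by
  have hw := mkJ_whitney n (n + 1) (by omega)
  rw [whitneyGen, if_neg (by omega), zVar_of_gt n (n + 1 + 1) (by omega),
    zVar_of_gt n (n + 1) (by omega)] at hw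
  have e1 : n + 1 - 1 = n := rfl
  rw [e1] at hw
  have ih := mkJ_zVar n hn n le_rfl
  simp only [map_add, map_mul, map_zero, mul_zero, add_zero, zero_add] at hw
  simp only [map_mul, bwd_X0, bwd_X1]
  refine neg_one_pow_cancel n ?_
  linear_combination hw - (Ideal.Quotient.mk (Jideal n)) (X 0)
    * (Ideal.Quotient.mk (Jideal n)) (X 1) * ih

lemma mkJ_bwd_X0 (n : ℕ) (hn : 1 ≤ n) :
    Ideal.Quotient.mk (Jideal n) ((X 0 : MvPolynomial (Fin (n+2)) ℤ) ^ (n + 2)) = 0 := by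
  have h1 := mkJ_bwd_hsum n hn
  have h2 := mkJ_bwd_xy n hn
  have hb := congrArg (Ideal.Quotient.mk (Jideal n) ∘ bwd n) (hsum_succB (n + 1))
  have hr := congrArg (Ideal.Quotient.mk (Jideal n) ∘ bwd n) (hsum_rec n)
  simp only [Function.comp_apply, map_sub, map_mul, map_add, map_pow, bwd_X0, bwd_X1] at hb hr
  simp only [map_mul, bwd_X0, bwd_X1] at h2
  have e : n + 1 + 1 = n + 2 := rfl
  simp only [e] at hb
  simp only [map_pow]
  linear_combination -hb + hr - h2 + (Ideal.Quotient.mk (Jideal n)) (X 0) * h1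

lemma mkJ_bwd_X1 (n : ℕ) (hn : 1 ≤ n) :
    Ideal.Quotient.mk (Jideal n) ((X 1 : MvPolynomial (Fin (n+2)) ℤ) ^ (n + 2)) = 0 := by
  have h1 := mkJ_bwd_hsum n hn
  have h2 := mkJ_bwd_xy n hn
  have hb := congrArg (Ideal.Quotient.mk (Jideal n) ∘ bwd n) (hsum_succA (n + 1))
  have hr := congrArg (Ideal.Quotient.mk (Jideal n) ∘ bwd n) (hsum_rec n)
  simp only [Function.comp_apply, map_sub, map_mul, map_add, map_pow, bwd_X0, bwd_X1] at hb hr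
  simp only [map_mul, bwd_X0, bwd_X1] at h2
  have e : n + 1 + 1 = n + 2 := rfl
  simp only [e] at hb
  simp only [map_pow]
  linear_combination -hb + hr - h2 + (Ideal.Quotient.mk (Jideal n)) (X 1) * h1

end FlagAux

open FlagAux in
/-- For `n ≥ 1` there is a ring isomorphism
`ℤ[x, y, z₁, …, z_n]/J ≅ ℤ[x, y]/(s_{n+1}, x^{n+2}, y^{n+2})` sending `x ↦ x`, `y ↦ y`,
where `J` is generated by the homogeneous components of positive degree of
`(1+x)(1+y)(1+z₁+⋯+z_n) − 1`, i.e. by `z_k + (x+y)z_{k−1} + xy·z_{k−2}` for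
`k = 1, …, n+2` (with `z₀ = 1`, `z_{n+1} = z_{n+2} = 0`). -/
theorem flag_cohomology_presentation_general (n : ℕ) (hn : 1 ≤ n) :
    let J : Ideal (MvPolynomial (Fin (n + 2)) ℤ) :=
      Ideal.span (whitneyGen n '' Set.Iio (n + 2))
    let K : Ideal (MvPolynomial (Fin 2) ℤ) :=
      Ideal.span {hsum (n + 1), X 0 ^ (n + 2), X 1 ^ (n + 2)}
    ∃ e : (MvPolynomial (Fin (n + 2)) ℤ ⧸ J) ≃+* (MvPolynomial (Fin 2) ℤ ⧸ K),
      e (Ideal.Quotient.mk J (X 0)) = Ideal.Quotient.mk K (X 0) ∧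
      e (Ideal.Quotient.mk J (X 1)) = Ideal.Quotient.mk K (X 1) := by
  intro J K
  have hJ : J = Jideal n := rfl
  have hK : K = Kideal n := rfl
  rw [hJ, hK]
  have hfwd : ∀ a ∈ Jideal n,
      ((Ideal.Quotient.mk (Kideal n)).comp (fwd n)) a = 0 := by
    have hle : Jideal n ≤ RingHom.ker ((Ideal.Quotient.mk (Kideal n)).comp (fwd n)) := by
      rw [Jideal, Ideal.span_le]
      rintro _ ⟨j, hj, rfl⟩
      simp only [SetLike.mem_coe, RingHom.mem_ker, RingHom.comp_apply]
      exact mkK_fwd_whitney n hn j (Set.mem_Iio.mp hj)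
    intro a ha; exact hle ha
  have hbwd : ∀ a ∈ Kideal n,
      ((Ideal.Quotient.mk (Jideal n)).comp (bwd n)) a = 0 := by
    have hle : Kideal n ≤ RingHom.ker ((Ideal.Quotient.mk (Jideal n)).comp (bwd n)) := by
      rw [Kideal, Ideal.span_le]
      rintro p hp
      simp only [Set.mem_insert_iff, Set.mem_singleton_iff] at hp
      simp only [SetLike.mem_coe, RingHom.mem_ker, RingHom.comp_apply]
      rcases hp with rfl | rfl | rfl
      · exact mkJ_bwd_hsum n hn
      · simp only [map_pow, bwd_X0]
        exact mkJ_bwd_X0 n hn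
      · simp only [map_pow, bwd_X1]
        exact mkJ_bwd_X1 n hn
    intro a ha; exact hle ha
  set Φ := Ideal.Quotient.lift (Jideal n) ((Ideal.Quotient.mk (Kideal n)).comp (fwd n)) hfwd
    with hΦ
  set Ψ := Ideal.Quotient.lift (Kideal n) ((Ideal.Quotient.mk (Jideal n)).comp (bwd n)) hbwd
    with hΨ
  have hΦmk : ∀ a, Φ (Ideal.Quotient.mk (Jideal n) a)
      = Ideal.Quotient.mk (Kideal n) (fwd n a) := fun a => Ideal.Quotient.lift_mk _ _ _
  have hΨmk : ∀ a, Ψ (Ideal.Quotient.mk (Kideal n) a)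
      = Ideal.Quotient.mk (Jideal n) (bwd n a) := fun a => Ideal.Quotient.lift_mk _ _ _
  have h1 : Φ.comp Ψ = RingHom.id _ := by
    apply Ideal.Quotient.ringHom_ext
    apply MvPolynomial.ringHom_ext
    · intro r
      rw [show (C r : MvPolynomial (Fin 2) ℤ) = (r : MvPolynomial (Fin 2) ℤ) from
        eq_intCast (C : ℤ →+* MvPolynomial (Fin 2) ℤ) r]
      simp only [RingHom.comp_apply, map_intCast, RingHom.id_apply]
    · intro i
      fin_cases i
      · simp only [RingHom.comp_apply, RingHom.id_apply, hΨmk, Fin.mk_zero, bwd_X0, hΦmk,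
          fwd_X0]
      · simp only [RingHom.comp_apply, RingHom.id_apply, hΨmk, Fin.mk_one, bwd_X1, hΦmk,
          fwd_X1]
  have h2 : Ψ.comp Φ = RingHom.id _ := by
    apply Ideal.Quotient.ringHom_ext
    apply MvPolynomial.ringHom_ext
    · intro r
      rw [show (C r : MvPolynomial (Fin (n + 2)) ℤ) = (r : MvPolynomial (Fin (n + 2)) ℤ) from
        eq_intCast (C : ℤ →+* MvPolynomial (Fin (n + 2)) ℤ) r]
      simp only [RingHom.comp_apply, map_intCast, RingHom.id_apply]
    · rintro ⟨v, hv⟩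
      simp only [RingHom.comp_apply, RingHom.id_apply]
      match v, hv with
      | 0, hv =>
        have h0 : (⟨0, hv⟩ : Fin (n + 2)) = 0 := rfl
        rw [h0, hΦmk, fwd_X0, hΨmk, bwd_X0]
      | 1, hv =>
        have h0 : (⟨1, hv⟩ : Fin (n + 2)) = 1 := by
          ext; simp [Fin.val_one]
        rw [h0, hΦmk, fwd_X1, hΨmk, bwd_X1]
      | (m + 2), hv =>
        have hz : zVar n (m + 1) = X (⟨m + 2, hv⟩ : Fin (n + 2)) :=
          zVar_of_le n (m + 1) (by omega) (by omega)
        rw [← hz, hΦmk, fwd_zVar n (m + 1) (by omega)]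
        rw [hΨmk]
        have hmk := mkJ_zVar n hn (m + 1) (by omega)
        simp only [map_mul, map_pow, map_neg, map_one]
        rw [← hmk]
  refine ⟨RingEquiv.ofRingHom Φ Ψ h1 h2, ?_, ?_⟩
  · show Φ (Ideal.Quotient.mk (Jideal n) (X 0)) = _
    rw [hΦmk, fwd_X0]
  · show Φ (Ideal.Quotient.mk (Jideal n) (X 1)) = _
    rw [hΦmk, fwd_X1]
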